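/- Let c ≥ 7 and let F = Σ_{k ∈ ℤ/cℤ} x_k x_{k+1} x_{k+2}² in ℚ[x_i : i ∈ ℤ/cℤ]. For every i ∈ ℤ/cℤ, ∂_i ∂_i F = ∂_{i−1} ∂_{i−3} F; equivalently, each binomial quadric q_i = x_i² − x_{i−1}x_{i−3} annihilates F as a second-order differential operator. -/
import Mathlib


open MvPolynomial

/-- Let `c ≥ 7` and `F = Σ_k x_k x_{k+1} x_{k+2}²` in `ℚ[x_i : i ∈ ℤ/cℤ]`.  For every
`i ∈ ℤ/cℤ`, `∂_i ∂_i F = ∂_{i−1} ∂_{i−3} F`; i.e. the binomial quadric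
`q_i = x_i² − x_{i−1}x_{i−3}` annihilates `F` as a second-order differential operator. -/
theorem binomial_quadric_annihilates (c : ℕ) (hc : 7 ≤ c) [NeZero c]
    (F : MvPolynomial (ZMod c) ℚ)
    (hF : F = ∑ k : ZMod c, X k * X (k + 1) * X (k + 2) ^ 2)
    (i : ZMod c) :
    pderiv i (pderiv i F) = pderiv (i - 1) (pderiv (i - 3) F) := by
  have hz : ∀ n : ℕ, 0 < n → n < 7 → ((n : ℕ) : ZMod c) ≠ 0 := by
    intro n h1 h2 h
    rw [ZMod.natCast_eq_zero_iff] at h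
    have := Nat.le_of_dvd h1 h
    omega
  have h1 : (1 : ZMod c) ≠ 0 := by have := hz 1 one_pos (by omega); simpa using this
  have h2 : (2 : ZMod c) ≠ 0 := by have := hz 2 (by omega) (by omega); push_cast at this; exact this
  have h3 : (3 : ZMod c) ≠ 0 := by have := hz 3 (by omega) (by omega); push_cast at this; exact this
  have h4 : (4 : ZMod c) ≠ 0 := by have := hz 4 (by omega) (by omega); push_cast at this; exact this
  -- closed form of the first derivative
  have p2 : ∀ j : ZMod c, pderiv j (2 : MvPolynomial (ZMod c) ℚ) = 0 := by
    intro j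
    rw [show (2 : MvPolynomial (ZMod c) ℚ) = C 2 from (map_ofNat C 2).symm, pderiv_C]
  have hD : ∀ j : ZMod c, pderiv j F
      = X (j+1) * X (j+2)^2 + X (j-1) * X (j+1)^2 + 2 * X (j-2) * X (j-1) * X j := by
    intro j
    rw [hF, map_sum]
    have hterm : ∀ k : ZMod c,
        pderiv j (X k * X (k+1) * X (k+2)^2 : MvPolynomial (ZMod c) ℚ)
        = (if k = j then X (j+1) * X (j+2)^2 else 0)
          + (if k = j - 1 then X (j-1) * X (j+1)^2 else 0)
          + (if k = j - 2 then 2 * X (j-2) * X (j-1) * X j else 0) := by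
      intro k
      have n1 : j ≠ j - 1 := fun h => h1 (by linear_combination h)
      have n2 : j ≠ j - 2 := fun h => h2 (by linear_combination h)
      have n12 : j - 1 ≠ j - 2 := fun h => h1 (by linear_combination h)
      rcases eq_or_ne k j with rfl | hkj
      · have e1 : k + 1 ≠ k := fun h => h1 (by linear_combination h)
        have e2 : k + 2 ≠ k := fun h => h2 (by linear_combination h)
        rw [if_pos rfl, if_neg n1, if_neg n2]
        simp [pderiv_mul, pderiv_X_self, pderiv_X_of_ne e1, pderiv_X_of_ne e2, pow_two]
        ring
      rcases eq_or_ne k (j - 1) with rfl | hk1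
      · have e1 : j - 1 ≠ j := fun h => h1 (by linear_combination -h)
        have e2 : j - 1 + 2 ≠ j := fun h => h1 (by linear_combination h)
        have e3 : j - 1 + 1 = j := by ring
        have e6 : j - 1 + 2 = j + 1 := by ring
        have e7 : j + 1 ≠ j := fun h => h1 (by linear_combination h)
        rw [if_pos rfl, if_neg hkj, if_neg n12, e3, e6]
        simp [pderiv_mul, pderiv_X_self, pderiv_X_of_ne e1, pderiv_X_of_ne e7, pow_two]
        ring
      rcases eq_or_ne k (j - 2) with rfl | hk2
      · have e1 : j - 2 ≠ j := fun h => h2 (by linear_combination -h)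
        have e2 : j - 2 + 1 ≠ j := fun h => h1 (by linear_combination -h)
        have e3 : j - 2 + 2 = j := by ring
        have e4 : j - 2 + 1 = j - 1 := by ring
        have e5 : j - 1 ≠ j := fun h => h1 (by linear_combination -h)
        rw [if_pos rfl, if_neg hkj, if_neg hk1, e3, e4]
        simp [pderiv_mul, pderiv_X_self, pderiv_X_of_ne e1, pderiv_X_of_ne e2,
          pderiv_X_of_ne e5, pow_two, p2]
        ring
      · have e1 : k ≠ j := hkj
        have e2 : k + 1 ≠ j := fun h => hk1 (by linear_combination h)
        have e3 : k + 2 ≠ j := fun h => hk2 (by linear_combination h)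
        rw [if_neg hkj, if_neg hk1, if_neg hk2]
        simp [pderiv_mul, pderiv_X_of_ne e1, pderiv_X_of_ne e2, pderiv_X_of_ne e3, pow_two]
    simp_rw [hterm, Finset.sum_add_distrib, Finset.sum_ite_eq' Finset.univ,
      if_pos (Finset.mem_univ _)]
  rw [hD i, hD (i - 3)]
  have m1 : i + 1 ≠ i := fun h => h1 (by linear_combination h)
  have m2 : i + 2 ≠ i := fun h => h2 (by linear_combination h)
  have m3 : i - 1 ≠ i := fun h => h1 (by linear_combination -h)
  have m4 : i - 2 ≠ i := fun h => h2 (by linear_combination -h)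
  have r1 : i - 3 + 1 ≠ i - 1 := fun h => h1 (by linear_combination -h)
  have r2 : i - 3 + 2 = i - 1 := by ring
  have r3 : i - 3 - 1 ≠ i - 1 := fun h => h3 (by linear_combination -h)
  have r4 : i - 3 - 2 ≠ i - 1 := fun h => h4 (by linear_combination -h)
  have r5 : i - 3 ≠ i - 1 := fun h => h2 (by linear_combination -h)
  have r6 : i - 3 - 1 = i - 4 := by ring
  have r7 : i - 3 - 2 = i - 5 := by ring
  rw [r2]
  simp [pderiv_mul, pderiv_X_self, pderiv_X_of_ne m1, pderiv_X_of_ne m2, pderiv_X_of_ne m3,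
    pderiv_X_of_ne m4, pderiv_X_of_ne r1, pderiv_X_of_ne r3, pderiv_X_of_ne r4,
    pderiv_X_of_ne r5, pow_two, p2]
  ring
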